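/- Let (T,c) be an algebraic tree. Then for all x,y,z ∈ T, [x,y] ∪ [y,z] = [x,z] ∪ [c(x,y,z), y], and moreover [x,z] and [c(x,y,z), y] \ {c(x,y,z)} are disjoint. -/

import Mathlib

variable {T : Type*}

/-- An algebraic tree: a symmetric branch point map satisfying the
2-point, 3-point and 4-point conditions (BPM1)–(BPM4). -/
def IsAlgTree (c : T → T → T → T) : Prop :=
  (∀ x y z, c x y z = c y x z) ∧
  (∀ x y z, c x y z = c x z y) ∧
  (∀ x y, c x y y = y) ∧
  (∀ x y z, c x y (c x y z) = c x y z) ∧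
  (∀ x₁ x₂ x₃ x₄, c x₁ x₂ x₃ = c x₁ x₂ x₄ ∨ c x₁ x₂ x₃ = c x₁ x₃ x₄ ∨
    c x₁ x₂ x₃ = c x₂ x₃ x₄)

/-- The interval `[x,y] = {w : c(x,y,w) = w}`. -/
def interval (c : T → T → T → T) (x y : T) : Set T := {w | c x y w = w}

/-!
Everything follows from the 4-point condition through two facts about a tree: the median
`c x y z` is the only point lying on all three of `[x,y]`, `[x,z]`, `[y,z]`, and
`u ∈ [x,y]` implies `[u,y] ⊆ [x,y]`. A point of `[x,y]` either lies on `[x,z]` or on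
`[x,y] ∩ [y,z]`, which is `[c x y z, y]`; a point of `[x,z]` lies on `[x,y]` or `[y,z]`.
For disjointness, a point of `[x,z] ∩ [c x y z, y]` lies on `[x,y]` and on `[z,y]`, hence is
the median.
-/

theorem mem_interval {c : T → T → T → T} {x y w : T} : w ∈ interval c x y ↔ c x y w = w :=
  Iff.rfl

namespace IsAlgTree

variable {c : T → T → T → T}

theorem comm_left (hc : IsAlgTree c) (x y z : T) : c x y z = c y x z := hc.1 x y z

theorem comm_right (hc : IsAlgTree c) (x y z : T) : c x y z = c x z y := hc.2.1 x y z

theorem self_right (hc : IsAlgTree c) (x y : T) : c x y y = y := hc.2.2.1 x y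

theorem idem (hc : IsAlgTree c) (x y z : T) : c x y (c x y z) = c x y z := hc.2.2.2.1 x y z

theorem four_point (hc : IsAlgTree c) (x₁ x₂ x₃ x₄ : T) :
    c x₁ x₂ x₃ = c x₁ x₂ x₄ ∨ c x₁ x₂ x₃ = c x₁ x₃ x₄ ∨ c x₁ x₂ x₃ = c x₂ x₃ x₄ :=
  hc.2.2.2.2 x₁ x₂ x₃ x₄

theorem rotate (hc : IsAlgTree c) (x y z : T) : c x y z = c y z x := by
  rw [hc.comm_left x y z, hc.comm_right y x z]

theorem self_left (hc : IsAlgTree c) (x y : T) : c x y x = x := by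
  rw [hc.comm_left, hc.self_right]

theorem reverse (hc : IsAlgTree c) (x y z : T) : c z y x = c x y z := by
  rw [hc.comm_left, ← hc.rotate]

theorem left_mem_interval (hc : IsAlgTree c) (x y : T) : x ∈ interval c x y :=
  hc.self_left x y

theorem interval_comm (hc : IsAlgTree c) (x y : T) : interval c x y = interval c y x := by
  ext w
  simp only [mem_interval, hc.comm_left x y w]

theorem median_mem_interval (hc : IsAlgTree c) (x y z : T) : c x y z ∈ interval c x y :=
  hc.idem x y z

theorem eq_median_of_mem_interval (hc : IsAlgTree c) {x y z w : T}
    (hxy : w ∈ interval c x y) (hxz : w ∈ interval c x z) (hyz : w ∈ interval c y z) :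
    w = c x y z := by
  rcases hc.four_point x y z w with h | h | h
  · rw [h, hxy]
  · rw [h, hxz]
  · rw [h, hyz]

theorem eq_of_median_eq (hc : IsAlgTree c) {x y u w : T} (hu : c x y w = u)
    (hw : w ∈ interval c u y) : w = u := by
  have hu' : c u y w = u := by
    rw [← hu, hc.rotate _ y w, hc.rotate x y w, hc.idem]
  rw [← hw, hu']

theorem interval_subset_of_mem (hc : IsAlgTree c) {x y u : T} (hu : u ∈ interval c x y) :
    interval c u y ⊆ interval c x y := by
  intro w hw
  rw [mem_interval] at hu hw ⊢
  have of_median_eq_u : c x y w = u → c x y w = w := fun h => by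
    rw [hc.eq_of_median_eq h hw, hu]
  rcases hc.four_point x u y w with h | h | h
  · have hxuw : c x u w = u := by rw [← h, hc.comm_right, hu]
    rcases hc.four_point x y w u with h' | h' | h'
    · exact of_median_eq_u (h'.trans hu)
    · exact of_median_eq_u (by rw [h', hc.comm_right x w u, hxuw])
    · rw [h', ← hc.rotate u y w, hw]
  · exact of_median_eq_u (by rw [← h, hc.comm_right, hu])
  · have : u = w := by rw [← hw, ← h, hc.comm_right, hu]
    rw [← this, hu]

theorem inter_subset_interval_median (hc : IsAlgTree c) (x y z : T) :
    interval c x y ∩ interval c y z ⊆ interval c (c x y z) y := by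
  rintro w ⟨hxy, hyz⟩
  have of_eq_median : w = c x y z → w ∈ interval c (c x y z) y := fun h => by
    rw [← h]
    exact hc.left_mem_interval w y
  rw [mem_interval] at hxy hyz ⊢
  rcases hc.four_point x z w y with h | h | h
  · have hm : c x w (c x y z) = c x y z := by
      rw [hc.comm_right x y z, ← h, hc.comm_right x z w, hc.idem]
    rcases hc.four_point x y w (c x y z) with h' | h' | h'
    · exact of_eq_median (by rw [← hxy, h', hc.idem])
    · exact of_eq_median (by rw [← hxy, h', hm])
    · rw [hc.rotate, ← h', hxy]
  · exact of_eq_median <| hc.eq_median_of_mem_interval hxy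
      (by rw [mem_interval, h, hc.comm_right, hxy]) hyz
  · exact of_eq_median <| hc.eq_median_of_mem_interval hxy
      (by rw [mem_interval, h, ← hc.rotate, hyz]) hyz

theorem interval_subset_union_interval_median (hc : IsAlgTree c) (x y z : T) :
    interval c x y ⊆ interval c x z ∪ interval c (c x y z) y := by
  intro w hw
  rcases hc.four_point x y w z with h | h | h
  · right
    rw [← hw, h]
    exact hc.left_mem_interval _ y
  · left
    rw [mem_interval, hc.comm_right, ← h, hw]
  · right
    refine hc.inter_subset_interval_median x y z ⟨hw, ?_⟩
    rw [mem_interval, hc.comm_right, ← h, hw]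

theorem interval_subset_union_interval (hc : IsAlgTree c) (x y z : T) :
    interval c x z ⊆ interval c x y ∪ interval c y z := by
  intro w hw
  rcases hc.four_point x z w y with h | h | h
  · left
    rw [← hw, h, hc.comm_right]
    exact hc.median_mem_interval x y z
  · left
    rw [mem_interval, hc.comm_right, ← h, hw]
  · right
    rw [mem_interval, hc.rotate, ← h, hw]

theorem disjoint_interval_interval_median_diff (hc : IsAlgTree c) (x y z : T) :
    Disjoint (interval c x z) (interval c (c x y z) y \ {c x y z}) := by
  rw [Set.disjoint_left]
  rintro w hxz ⟨hmy, hne⟩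
  have hzy : c x y z ∈ interval c z y := by
    rw [← hc.reverse]
    exact hc.median_mem_interval z y x
  refine hne (hc.eq_median_of_mem_interval (hc.interval_subset_of_mem
    (hc.median_mem_interval x y z) hmy) hxz ?_)
  rw [hc.interval_comm]
  exact hc.interval_subset_of_mem hzy hmy

end IsAlgTree

theorem stmt_5_general (c : T → T → T → T) (hc : IsAlgTree c)
    (x y z : T) :
    interval c x y ∪ interval c y z
      = interval c x z ∪ interval c (c x y z) y ∧
    Disjoint (interval c x z) (interval c (c x y z) y \ {c x y z}) := by
  refine ⟨Set.Subset.antisymm (Set.union_subset ?_ ?_) (Set.union_subset ?_ ?_),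
    hc.disjoint_interval_interval_median_diff x y z⟩
  · exact hc.interval_subset_union_interval_median x y z
  · have h := hc.interval_subset_union_interval_median z y x
    rwa [hc.reverse, hc.interval_comm z y, hc.interval_comm z x] at h
  · exact hc.interval_subset_union_interval x y z
  · exact (hc.interval_subset_of_mem (hc.median_mem_interval x y z)).trans
      Set.subset_union_left

theorem stmt_5 [Nonempty T] (c : T → T → T → T) (hc : IsAlgTree c)
    (x y z : T) :
    interval c x y ∪ interval c y z
      = interval c x z ∪ interval c (c x y z) y ∧
    Disjoint (interval c x z) (interval c (c x y z) y \ {c x y z}) :=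
  stmt_5_general c hc x y z
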